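/- arXiv:1101.3019 — 11 statements merged into one kernel-verified Lean document; each statement's English description precedes it below -/
import Mathlib

section
/- Every finite group G embeds into a group H of order 2·|G|² in which every element of (the image of) G is a square. Precisely: for every finite group G there exist a group H with Nat.card H = 2 * (Nat.card G)^2 and an injective group homomorphism f : G →* H such that for every g : G there exists h : H with h^2 = f g. -/
section Aux

variable (G : Type) [Group G]

/-- the swap automorphism of `G × G` -/
private def swapAut : MulAut (G × G) := MulEquiv.prodComm

private lemma swapAut_sq : swapAut G * swapAut G = 1 := by
  ext x <;> rfl

/-- the action of `ℤ/2` on `G × G` by swapping -/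
private def phi : Multiplicative (ZMod 2) →* MulAut (G × G) :=
  MonoidHom.mk' (fun x => (swapAut G) ^ (Multiplicative.toAdd x).val) (by
    intro a b
    have h2 := swapAut_sq G
    induction a using Multiplicative.rec with | _ a =>
    induction b using Multiplicative.rec with | _ b =>
    fin_cases a <;> fin_cases b <;>
      simp_all [pow_succ, ← ofAdd_add] <;>
      rfl)

end Aux

/-- Every finite group `G` embeds into a group `H` of order `2·|G|²` in which
every element of (the image of) `G` is a square. -/
theorem economical_square_roots (G : Type) [Group G] [Finite G] :
    ∃ (H : Type) (_ : Group H) (f : G →* H),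
      Nat.card H = 2 * (Nat.card G) ^ 2 ∧
      Function.Injective f ∧
      ∀ g : G, ∃ h : H, h ^ 2 = f g := by
  refine ⟨(G × G) ⋊[phi G] Multiplicative (ZMod 2), inferInstance,
    SemidirectProduct.inl.comp ((MonoidHom.id G).prod (MonoidHom.id G)), ?_, ?_, ?_⟩
  · have e : ((G × G) ⋊[phi G] Multiplicative (ZMod 2)) ≃
        (G × G) × Multiplicative (ZMod 2) :=
      { toFun := fun x => (x.left, x.right)
        invFun := fun x => ⟨x.1, x.2⟩
        left_inv := fun x => rfl
        right_inv := fun x => rfl }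
    rw [Nat.card_congr e, Nat.card_prod, Nat.card_prod,
      Nat.card_congr (Multiplicative.toAdd (α := ZMod 2)), Nat.card_zmod]
    ring
  · intro a b hab
    have := SemidirectProduct.inl_injective hab
    exact congrArg Prod.fst this
  · intro g
    refine ⟨⟨(g, 1), Multiplicative.ofAdd 1⟩, ?_⟩
    have hval : ZMod.val (1 : ZMod 2) = 1 := rfl
    have hphi : phi G (Multiplicative.ofAdd 1) = swapAut G := by
      show (swapAut G) ^ (Multiplicative.toAdd (Multiplicative.ofAdd (1 : ZMod 2))).val = _
      rw [toAdd_ofAdd, hval, pow_one]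
    rw [sq]
    ext
    · show ((g, 1) : G × G).1 * ((phi G (Multiplicative.ofAdd 1)) (g, 1)).1 = g
      rw [hphi]; simp [swapAut]
    · show ((g, 1) : G × G).2 * ((phi G (Multiplicative.ofAdd 1)) (g, 1)).2 = g
      rw [hphi]; simp [swapAut]
    · show Multiplicative.ofAdd (1 : ZMod 2) * Multiplicative.ofAdd 1 = 1
      rw [← ofAdd_add]; decide
end

section
/- There exist arbitrarily large finite groups G together with an element g ∈ G such that no finite group of order smaller than |G|² can contain G together with a square root of g. Precisely: for every natural number N there exist a finite group G with N ≤ Nat.card G and an element g : G such that for every finite group H and every injective group homomorphism f : G →* H, if there exists x : H with x^2 = f g, then (Nat.card G)^2 ≤ Nat.card H. -/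
/-!
Let `a = f (r 1)` and `g = f (sr 0)` in `H`, so `g` is an involution inverting `a`, and let
`x² = g`. Then `b = x a x⁻¹` also has order `p`, is inverted by `g`, and `x b x⁻¹ = a⁻¹`. If `b = a ^ t`,
conjugating by `x` gives `a⁻¹ = a ^ (t²)`, so `-1` is a square mod `p`, impossible for
`p ≡ 3 mod 4`; hence `⟨a⟩ ∩ ⟨b⟩ = 1` and `⟨a⟩⟨b⟩` has `p²` elements. Every element of the coset
`⟨b⟩g` is an involution different from `1`, so none has odd order; rewriting `u c v = g` or
`u c v = x` (`u, v ∈ ⟨b⟩`, `c ∈ ⟨a⟩`) as an element of odd order lying in `⟨b⟩g` shows that none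
of `x, g, x⁻¹` lies in `⟨b⟩⟨a⟩⟨b⟩`. So the cosets `⟨a⟩⟨b⟩ xᵏ`, `k < 4`, are disjoint and
`|H| ≥ 4p² = |D_p|²`.
Dirichlet's theorem supplies arbitrarily large primes `p ≡ 3 mod 4`.
-/

open Subgroup DihedralGroup

lemma Nat.exists_prime_ge_mod_four_eq_three (N : ℕ) : ∃ p, p.Prime ∧ p % 4 = 3 ∧ N ≤ p := by
  obtain ⟨p, hpN, hp, hp3⟩ :=
    Nat.forall_exists_prime_gt_and_modEq N (q := 4) (a := 3) (by norm_num) (by norm_num)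
  exact ⟨p, hp, hp3, hpN.le⟩

section

variable {G : Type*} [Group G]

lemma eq_one_of_sq_eq_one_of_odd_orderOf {y : G} (hy : Odd (orderOf y)) (h : y ^ 2 = 1) :
    y = 1 := by
  rcases (Nat.dvd_prime Nat.prime_two).mp (orderOf_dvd_of_pow_eq_one h) with h1 | h2
  · exact orderOf_eq_one_iff.mp h1
  · rw [h2] at hy; exact absurd hy (by decide)

lemma odd_orderOf_of_mem_zpowers {a c : G} (ha : Odd (orderOf a)) (hc : c ∈ zpowers a) :
    Odd (orderOf c) :=
  ha.of_dvd_nat (orderOf_dvd_of_mem_zpowers hc)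

lemma conj_eq_inv_of_mem_zpowers {g a c : G} (h : g * a * g⁻¹ = a⁻¹) (hc : c ∈ zpowers a) :
    g * c * g⁻¹ = c⁻¹ := by
  obtain ⟨k, rfl⟩ := mem_zpowers_iff.mp hc
  rw [← conj_zpow, h, inv_zpow]

lemma disjoint_zpowers_of_orderOf_eq_prime {p : ℕ} (hp : p.Prime) {a b : G} (ha : orderOf a = p)
    (hb : orderOf b = p) (hab : b ∉ zpowers a) : Disjoint (zpowers a) (zpowers b) := by
  rw [disjoint_iff]
  have hA : Nat.card (zpowers a) = p := by rw [Nat.card_zpowers, ha]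
  have hB : Nat.card (zpowers b) = p := by rw [Nat.card_zpowers, hb]
  rcases (Nat.dvd_prime hp).mp (hA ▸ card_dvd_of_le (inf_le_left (b := zpowers b))) with h | h
  · exact card_eq_one.mp h
  · have : Finite (zpowers a) := Nat.finite_of_card_ne_zero (hA ▸ hp.ne_zero)
    have : Finite (zpowers b) := Nat.finite_of_card_ne_zero (hB ▸ hp.ne_zero)
    have hinfA := eq_of_le_of_card_ge inf_le_left (hA.trans h.symm).le
    have hinfB := eq_of_le_of_card_ge inf_le_right (hB.trans h.symm).le
    exact absurd (by rw [← hinfA, hinfB]; exact mem_zpowers b) hab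

lemma conj_notMem_zpowers {p : ℕ} [Fact p.Prime] (hp : p % 4 = 3) {a x : G}
    (ha : orderOf a = p) (hx : x * (x * a * x⁻¹) * x⁻¹ = a⁻¹) : x * a * x⁻¹ ∉ zpowers a := by
  intro hmem
  obtain ⟨t, ht⟩ := mem_zpowers_iff.mp hmem
  have hpow : a ^ (t * t + 1) = 1 := by
    rw [zpow_add, zpow_mul, ht, conj_zpow, ht, hx, zpow_one, inv_mul_cancel]
  have hdvd : ((t * t + 1 : ℤ) : ZMod p) = 0 :=
    (ZMod.intCast_zmod_eq_zero_iff_dvd _ p).mpr (ha ▸ orderOf_dvd_iff_zpow_eq_one.mpr hpow)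
  push_cast at hdvd
  exact ZMod.mod_four_ne_three_of_sq_eq_neg_one (y := (t : ZMod p)) (by linear_combination hdvd) hp

lemma card_mul_card_mul_card_le [Finite G] {A B C : Subgroup G} (hAB : Disjoint A B)
    (hC : ∀ u ∈ B, ∀ c ∈ A, ∀ v ∈ B, u * c * v ∈ C → u * c * v = 1) :
    Nat.card A * Nat.card B * Nat.card C ≤ Nat.card G := by
  have hinj : Function.Injective fun t : (A × B) × C ↦ (t.1.1 : G) * t.1.2 * t.2 := by
    rintro ⟨⟨⟨c, hc⟩, ⟨n, hn⟩⟩, ⟨y, hy⟩⟩ ⟨⟨⟨c', hc'⟩, ⟨n', hn'⟩⟩, ⟨y', hy'⟩⟩ h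
    simp only at h
    have key : n⁻¹ * (c⁻¹ * c') * n' = y * y'⁻¹ := by
      calc n⁻¹ * (c⁻¹ * c') * n' = n⁻¹ * c⁻¹ * (c' * n' * y') * y'⁻¹ := by group
        _ = y * y'⁻¹ := by rw [← h]; group
    obtain rfl : y = y' := by
      have := hC _ (inv_mem hn) _ (mul_mem (inv_mem hc) hc') _ hn'
        (key ▸ mul_mem hy (inv_mem hy'))
      exact mul_inv_eq_one.mp (key ▸ this)
    rw [mul_injective_of_disjoint hAB (a₁ := (⟨c, hc⟩, ⟨n, hn⟩)) (a₂ := (⟨c', hc'⟩, ⟨n', hn'⟩))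
      (mul_right_cancel h)]
  simpa [Nat.card_prod, mul_assoc] using Nat.card_le_card_of_injective _ hinj

lemma coe_zpowers_subset_of_pow_four_eq_one {x : G} (hx : x ^ 4 = 1) :
    (zpowers x : Set G) ⊆ {1, x, x ^ 2, x⁻¹} := by
  intro y hy
  obtain ⟨k, rfl⟩ := mem_zpowers_iff.mp hy
  rw [zpow_eq_zpow_emod' k hx]
  have h0 : 0 ≤ k % (4 : ℕ) := Int.emod_nonneg k (by norm_num)
  have h4 : k % (4 : ℕ) < 4 := Int.emod_lt_of_pos k (by norm_num)
  interval_cases k % (4 : ℕ)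
  · simp
  · simp
  · simp
  · refine Or.inr (Or.inr (Or.inr (eq_inv_of_mul_eq_one_left ?_)))
    rw [← hx]; group

section Involution

variable {g b : G}

lemma ne_mul_of_odd_orderOf (hg : g ^ 2 = 1) (hg1 : g ≠ 1) (hgb : g * b * g⁻¹ = b⁻¹)
    (hb : Odd (orderOf b)) {n y : G} (hn : n ∈ zpowers b) (hy : Odd (orderOf y)) :
    y ≠ n * g := by
  rintro rfl
  have hsq : (n * g) ^ 2 = 1 := by
    calc (n * g) ^ 2 = n * (g * n * g⁻¹) * g ^ 2 := by rw [sq, sq]; group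
      _ = 1 := by rw [conj_eq_inv_of_mem_zpowers hgb hn, hg]; group
  have hgn : g = n⁻¹ := eq_inv_of_mul_eq_one_right (eq_one_of_sq_eq_one_of_odd_orderOf hy hsq)
  exact hg1 (eq_one_of_sq_eq_one_of_odd_orderOf
    (hgn ▸ odd_orderOf_of_mem_zpowers hb (inv_mem hn)) hg)

lemma mul_mul_ne_of_odd_orderOf (hg : g ^ 2 = 1) (hg1 : g ≠ 1) (hgb : g * b * g⁻¹ = b⁻¹)
    (hb : Odd (orderOf b)) {u c v : G} (hu : u ∈ zpowers b) (hc : Odd (orderOf c))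
    (hv : v ∈ zpowers b) : u * c * v ≠ g := by
  intro h
  refine ne_mul_of_odd_orderOf hg hg1 hgb hb (mul_mem (inv_mem hu) hv) hc ?_
  calc c = u⁻¹ * (u * c * v) * v⁻¹ := by group
    _ = u⁻¹ * (g * v⁻¹ * g⁻¹) * g := by rw [h]; group
    _ = u⁻¹ * v * g := by rw [conj_eq_inv_of_mem_zpowers hgb (inv_mem hv), inv_inv]

lemma mul_mul_ne_of_sq_eq (hg : g ^ 2 = 1) (hg1 : g ≠ 1) (hgb : g * b * g⁻¹ = b⁻¹)
    (hb : Odd (orderOf b)) {a x : G} (hga : g * a * g⁻¹ = a⁻¹) (hx : x ^ 2 = g)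
    {u c v : G} (hu : u ∈ zpowers b) (hc : c ∈ zpowers a) (hv : v ∈ zpowers b) :
    u * c * v ≠ x := by
  intro h
  have hginv : g⁻¹ = g := inv_eq_of_mul_eq_one_right (by rw [← sq, hg])
  have hcvuc : c * (v * u) * c = u⁻¹ * v * g := by
    calc c * (v * u) * c = u⁻¹ * ((u * c * v) * (u * c * v)) * v⁻¹ := by group
      _ = u⁻¹ * (g * v⁻¹ * g⁻¹) * g := by rw [h, ← sq, hx]; group
      _ = u⁻¹ * v * g := by rw [conj_eq_inv_of_mem_zpowers hgb (inv_mem hv), inv_inv]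
  refine ne_mul_of_odd_orderOf hg hg1 hgb hb (mul_mem hv hu) (y := c⁻¹ * (u⁻¹ * v) * c) ?_ ?_
  · rw [← (show SemiconjBy c⁻¹ (u⁻¹ * v) (c⁻¹ * (u⁻¹ * v) * c) by
      simp [SemiconjBy, mul_assoc]).orderOf_eq]
    exact odd_orderOf_of_mem_zpowers hb (mul_mem (inv_mem hu) hv)
  · calc c⁻¹ * (u⁻¹ * v) * c = c⁻¹ * (u⁻¹ * v * g) * g⁻¹ * c := by group
      _ = c⁻¹ * (c * (v * u) * c) * g⁻¹ * c := by rw [hcvuc]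
      _ = v * u * g⁻¹ * ((g * c * g⁻¹) * c) := by group
      _ = v * u * g := by rw [conj_eq_inv_of_mem_zpowers hga hc, inv_mul_cancel, mul_one, hginv]

lemma mul_mul_mem_zpowers_eq_one (hg : g ^ 2 = 1) (hg1 : g ≠ 1) (hgb : g * b * g⁻¹ = b⁻¹)
    (hb : Odd (orderOf b)) {a x : G} (hga : g * a * g⁻¹ = a⁻¹) (ha : Odd (orderOf a))
    (hx : x ^ 2 = g) :
    ∀ u ∈ zpowers b, ∀ c ∈ zpowers a, ∀ v ∈ zpowers b, u * c * v ∈ zpowers x → u * c * v = 1 := by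
  intro u hu c hc v hv h
  have hx4 : x ^ 4 = 1 := by rw [show 4 = 2 * 2 from rfl, pow_mul, hx, hg]
  rcases coe_zpowers_subset_of_pow_four_eq_one hx4 h with h1 | hx' | hg' | hx'
  · exact h1
  · exact absurd hx' (mul_mul_ne_of_sq_eq hg hg1 hgb hb hga hx hu hc hv)
  · exact absurd (hx ▸ hg') (mul_mul_ne_of_odd_orderOf hg hg1 hgb hb hu
      (odd_orderOf_of_mem_zpowers ha hc) hv)
  · refine absurd ?_ (mul_mul_ne_of_sq_eq hg hg1 hgb hb hga hx (inv_mem hv) (inv_mem hc)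
      (inv_mem hu))
    rw [← inv_inv x, ← hx']; group

end Involution

theorem four_mul_sq_le_card_of_sq_eq [Finite G] {p : ℕ} (hp : p.Prime) (hp4 : p % 4 = 3)
    {a g x : G} (ha : orderOf a = p) (hg : g ^ 2 = 1) (hg1 : g ≠ 1) (hga : g * a * g⁻¹ = a⁻¹)
    (hx : x ^ 2 = g) : 4 * p ^ 2 ≤ Nat.card G := by
  have : Fact p.Prime := ⟨hp⟩
  set b := x * a * x⁻¹ with hb_def
  have hxb : x * b * x⁻¹ = a⁻¹ := by
    calc x * b * x⁻¹ = (x * x) * a * (x * x)⁻¹ := by rw [hb_def]; group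
      _ = a⁻¹ := by rw [← sq, hx, hga]
  have hgb : g * b * g⁻¹ = b⁻¹ := by
    calc g * b * g⁻¹ = x * (g * a * g⁻¹) * x⁻¹ := by rw [hb_def, ← hx]; group
      _ = b⁻¹ := by rw [hga, hb_def]; group
  have hb : orderOf b = p :=
    ha ▸ (show SemiconjBy x a b by simp [SemiconjBy, hb_def]).orderOf_eq.symm
  have hodd : Odd p := Nat.odd_iff.mpr (by omega)
  have hAB := disjoint_zpowers_of_orderOf_eq_prime hp ha hb (conj_notMem_zpowers hp4 ha hxb)
  have hx4 : orderOf x = 2 ^ 2 := orderOf_eq_prime_pow (by rwa [pow_one, hx])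
    (by rw [show 2 ^ (1 + 1) = 2 * 2 from rfl, pow_mul, hx, hg])
  calc 4 * p ^ 2 = Nat.card (zpowers a) * Nat.card (zpowers b) * Nat.card (zpowers x) := by
        rw [Nat.card_zpowers, Nat.card_zpowers, Nat.card_zpowers, ha, hb, hx4]; ring
    _ ≤ Nat.card G := card_mul_card_mul_card_le hAB
        (mul_mul_mem_zpowers_eq_one hg hg1 hgb (hb ▸ hodd) hga (ha ▸ hodd) hx)

end

/-- There exist arbitrarily large finite groups `G` with an element `g` such that
no finite group of order less than `|G|²` contains `G` together with a square root of `g`. -/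
theorem lower_bound_square_roots :
    ∀ N : ℕ, ∃ (G : Type) (_ : Group G) (_ : Finite G) (g : G),
      N ≤ Nat.card G ∧
      ∀ (H : Type) (_ : Group H) (_ : Finite H) (f : G →* H),
        Function.Injective f → (∃ x : H, x ^ 2 = f g) →
        (Nat.card G) ^ 2 ≤ Nat.card H := by
  intro N
  obtain ⟨p, hp, hp4, hpN⟩ := Nat.exists_prime_ge_mod_four_eq_three N
  have : NeZero p := ⟨hp.ne_zero⟩
  refine ⟨DihedralGroup p, inferInstance, inferInstance, sr 0, by rw [nat_card]; omega, ?_⟩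
  rintro H _ _ f hf ⟨x, hx⟩
  have hsr : (sr 0 : DihedralGroup p) ≠ 1 := by rw [one_def]; nofun
  have hrel : sr 0 * r 1 * (sr 0)⁻¹ = ((r 1)⁻¹ : DihedralGroup p) := by
    simp [sr_mul_r, sr_mul_sr, inv_sr, inv_r]
  calc Nat.card (DihedralGroup p) ^ 2 = 4 * p ^ 2 := by rw [nat_card]; ring
    _ ≤ Nat.card H := four_mul_sq_le_card_of_sq_eq hp hp4 (a := f (r 1))
        (by rw [orderOf_injective f hf, orderOf_r_one])
        (by rw [← map_pow, sq, sr_mul_self, map_one])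
        ((map_ne_one_iff f hf).mpr hsr)
        (by simpa only [map_mul, map_inv] using congrArg f hrel)
        hx
end

section
/- Let p be an odd prime, let G̃ be a group, let f : DihedralGroup p →* G̃ be an injective homomorphism with image G := f.range, let a : ZMod p, and let x : G̃ satisfy x^2 = f (DihedralGroup.sr a) and G̃ = ⟨G, x⟩ (i.e., ⊤ = f.range ⊔ Subgroup.zpowers x). Then either f.range is a normal subgroup of G̃, or the intersection of f.range with its conjugate x⁻¹ (f.range) x equals the cyclic subgroup Subgroup.zpowers (f (DihedralGroup.sr a)) generated by the reflection. -/
/-!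
The reflection `g = x²` commutes with `x`, so it lies in `G ∩ x⁻¹ G x`. Its preimage in `D_p`
contains an involution in a group of order `2p`, so by Lagrange it is either `⟨g⟩` or all of
`D_p`. In the second case `G ≤ x⁻¹ G x`, and since `x² ∈ G` this forces `x` to normalize `G`;
as `G` and `x` generate, `G` is normal.
-/

open DihedralGroup Subgroup

/-- The reverse inclusion `x⁻¹ H x ≤ H` comes from conjugating twice, since conjugation by
`x² ∈ H` fixes `H`. -/
lemma Subgroup.mem_normalizer_of_le_map_conj_of_sq_mem {G : Type*} [Group G] {H : Subgroup G}
    {x : G} (hle : H ≤ H.map (MulAut.conj x⁻¹).toMonoidHom) (hx : x ^ 2 ∈ H) :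
    x ∈ normalizer (H : Set G) := by
  have conj_mem : ∀ h ∈ H, x * h * x⁻¹ ∈ H := by
    intro h hh
    obtain ⟨k, hk, hkh⟩ := hle hh
    have hkh : x⁻¹ * k * x⁻¹⁻¹ = h := hkh
    rwa [← hkh, show x * (x⁻¹ * k * x⁻¹⁻¹) * x⁻¹ = k by group]
  refine mem_normalizer_iff.mpr fun h => ⟨conj_mem h, fun hh => ?_⟩
  have hsq : h = (x ^ 2)⁻¹ * (x * (x * h * x⁻¹) * x⁻¹) * x ^ 2 := by group
  rw [hsq]
  exact H.mul_mem (H.mul_mem (H.inv_mem hx) (conj_mem _ hh)) hx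

lemma Subgroup.eq_zpowers_or_eq_top_of_orderOf_eq_two {G : Type*} [Group G] {p : ℕ}
    (hp : p.Prime) (hG : Nat.card G = 2 * p) {g : G} (hg : orderOf g = 2) {K : Subgroup G}
    (hgK : g ∈ K) : K = zpowers g ∨ K = ⊤ := by
  have : Finite G := Nat.finite_of_card_ne_zero (by rw [hG]; positivity [hp.pos])
  obtain ⟨e, he⟩ : 2 ∣ Nat.card K := hg ▸ K.orderOf_dvd_natCard hgK
  have he_dvd : e ∣ p := by
    have := K.card_subgroup_dvd_card
    rwa [he, hG, Nat.mul_dvd_mul_iff_left two_pos] at this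
  rcases hp.eq_one_or_self_of_dvd e he_dvd with rfl | rfl
  · left
    refine (eq_of_le_of_card_ge (zpowers_le.mpr hgK) ?_).symm
    rw [Nat.card_zpowers, hg, he]
  · exact Or.inr (eq_top_of_card_eq K (he.trans hG.symm))

theorem normal_or_intersection_cyclic_general (p : ℕ) (hp : p.Prime)
    (G' : Type) [Group G'] (f : DihedralGroup p →* G')
    (a : ZMod p) (x : G') (hx : x ^ 2 = f (DihedralGroup.sr a))
    (hgen : (⊤ : Subgroup G') = f.range ⊔ Subgroup.zpowers x) :
    f.range.Normal ∨
      f.range ⊓ Subgroup.map (MulAut.conj x⁻¹).toMonoidHom f.range =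
        Subgroup.zpowers (f (DihedralGroup.sr a)) := by
  set H := f.range ⊓ f.range.map (MulAut.conj x⁻¹).toMonoidHom
  have hsr : f (sr a) ∈ H := by
    refine ⟨⟨sr a, rfl⟩, f (sr a), ⟨sr a, rfl⟩, ?_⟩
    show x⁻¹ * f (sr a) * x⁻¹⁻¹ = f (sr a)
    rw [← hx]; group
  rcases eq_zpowers_or_eq_top_of_orderOf_eq_two hp nat_card (orderOf_sr a)
    (show sr a ∈ H.comap f from hsr) with h | h
  · right
    have hH : H ≤ f.range := inf_le_left
    rw [← map_comap_eq_self hH, h, MonoidHom.map_zpowers]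
  · left
    have hrange : f.range ≤ H := by
      rintro _ ⟨y, rfl⟩
      exact (h ▸ mem_top y : y ∈ H.comap f)
    have hxn : x ∈ normalizer (f.range : Set G') :=
      mem_normalizer_of_le_map_conj_of_sq_mem (hrange.trans inf_le_right) (hx ▸ ⟨sr a, rfl⟩)
    rw [← normalizer_eq_top_iff, eq_top_iff, hgen]
    exact sup_le le_normalizer (zpowers_le.mpr hxn)

/-- Lemma 2: if `D_p = G ⊆ ⟨G, x⟩ = G'` and `x² = g` is a reflection, then either
`G ⊴ G'` or `G ∩ Gˣ = ⟨g⟩`. -/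
theorem normal_or_intersection_cyclic (p : ℕ) (hp : p.Prime) (hodd : Odd p)
    (G' : Type) [Group G'] (f : DihedralGroup p →* G') (hf : Function.Injective f)
    (a : ZMod p) (x : G') (hx : x ^ 2 = f (DihedralGroup.sr a))
    (hgen : (⊤ : Subgroup G') = f.range ⊔ Subgroup.zpowers x) :
    f.range.Normal ∨
      f.range ⊓ Subgroup.map (MulAut.conj x⁻¹).toMonoidHom f.range =
        Subgroup.zpowers (f (DihedralGroup.sr a)) :=
  normal_or_intersection_cyclic_general p hp G' f a x hx hgen
end

section
/- Let p be a prime with p ≡ 3 (mod 4), let G̃ be a group, and let f : DihedralGroup p →* G̃ be an injective homomorphism whose image f.range is a normal subgroup of G̃. Then no reflection of the embedded dihedral group is a square in G̃: for all a : ZMod p there is no x : G̃ with x^2 = f (DihedralGroup.sr a). -/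
/-- Lemma 3: if `D_p ⊴ G'` with `p ≡ 3 (mod 4)` prime, then no reflection of the
embedded `D_p` is a square in `G'`. -/
theorem no_reflection_square_of_normal (p : ℕ) (hp : p.Prime) (hp4 : p % 4 = 3)
    (G' : Type) [Group G'] (f : DihedralGroup p →* G') (hf : Function.Injective f)
    (hnorm : f.range.Normal) :
    ∀ a : ZMod p, ¬ ∃ x : G', x ^ 2 = f (DihedralGroup.sr a) := by
  haveI : Fact p.Prime := ⟨hp⟩
  haveI : NeZero p := ⟨hp.ne_zero⟩
  rintro a ⟨x, hx⟩
  have hp2 : p ≠ 2 := by omega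
  set φ : G' →* G' := (MulAut.conj x).toMonoidHom with hφ
  have hφa : ∀ y : G', φ y = x * y * x⁻¹ := fun y => rfl
  have hφinj : Function.Injective φ := (MulAut.conj x).injective
  -- the conjugate of f (r 1) by x lies in the range of f
  have hmem : φ (f (DihedralGroup.r 1)) ∈ f.range := by
    rw [hφa]; exact hnorm.conj_mem _ ⟨_, rfl⟩ x
  obtain ⟨g, hg⟩ := hmem
  -- g has order p
  have horder : orderOf g = p := by
    have : orderOf (f g) = orderOf (f (DihedralGroup.r 1)) := by
      rw [hg, orderOf_injective φ hφinj]
    rw [orderOf_injective f hf, orderOf_injective f hf,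
      DihedralGroup.orderOf_r_one] at this
    exact this
  -- hence g is a rotation
  obtain ⟨k⟩ | ⟨j⟩ := g
  case sr =>
    rw [DihedralGroup.orderOf_sr] at horder
    exact hp2 horder.symm
  have hk : (DihedralGroup.r k : DihedralGroup p) = (DihedralGroup.r 1) ^ k.val := by
    rw [DihedralGroup.r_one_pow, ZMod.natCast_val, ZMod.cast_id]
  -- conjugation by x sends f (r k) to f (r (k * k))
  have key : φ (f (DihedralGroup.r k)) = f (DihedralGroup.r (k * k)) := by
    calc φ (f (DihedralGroup.r k))
        = (φ (f (DihedralGroup.r 1))) ^ k.val := by rw [hk, map_pow, map_pow]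
      _ = f ((DihedralGroup.r k) ^ k.val) := by rw [← hg, map_pow]
      _ = f (DihedralGroup.r (k * k)) := by
          rw [hk, ← pow_mul, DihedralGroup.r_one_pow, Nat.cast_mul,
            ZMod.natCast_val, ZMod.cast_id]
  -- conjugating twice is conjugation by x² = f (sr a)
  have h2 : f (DihedralGroup.sr a) * f (DihedralGroup.r 1) * (f (DihedralGroup.sr a))⁻¹
      = f (DihedralGroup.r (k * k)) := by
    have : φ (φ (f (DihedralGroup.r 1))) = f (DihedralGroup.r (k * k)) := by
      rw [← hg, key]
    rw [hφa, hφa] at this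
    rw [← hx, ← this, sq, mul_inv_rev]
    group
  have h3 : DihedralGroup.sr a * DihedralGroup.r 1 * (DihedralGroup.sr a)⁻¹
      = (DihedralGroup.r (k * k) : DihedralGroup p) := by
    apply hf
    rw [map_mul, map_mul, map_inv]
    exact h2
  have h4 : (DihedralGroup.r (a - (a + 1)) : DihedralGroup p) = DihedralGroup.r (k * k) := h3
  have h5 : k * k = (-1 : ZMod p) := by
    have := (DihedralGroup.r.injEq _ _).mp h4
    rw [← this]; ring
  have hsq : IsSquare (-1 : ZMod p) := ⟨k, h5.symm⟩
  rw [ZMod.exists_sq_eq_neg_one_iff] at hsq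
  exact hsq hp4
end

section
/- Let p be an odd prime, G̃ a finite group, f : DihedralGroup p →* G̃ an injective homomorphism, and let K = {H : Subgroup G̃ | ∃ x : G̃, H = Subgroup.map (MulAut.conj x).toMonoidHom f.range} be the set of conjugates of f.range. Then for any two members H₁, H₂ of K, the number of H ∈ K with Nat.card (H ⊓ H₁) = p equals the number of H ∈ K with Nat.card (H ⊓ H₂) = p. (All connected components of the 'yellow' graph contain the same number of vertices.) -/
private lemma conj_map_map {G' : Type} [Group G'] (a b : G') (H : Subgroup G') :
    Subgroup.map (MulAut.conj a).toMonoidHom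
      (Subgroup.map (MulAut.conj b).toMonoidHom H) =
    Subgroup.map (MulAut.conj (a * b)).toMonoidHom H := by
  rw [Subgroup.map_map]
  congr 1
  ext x
  simp [mul_assoc]

private lemma conj_card {G' : Type} [Group G'] (a : G') (H : Subgroup G') :
    Nat.card (Subgroup.map (MulAut.conj a).toMonoidHom H) = Nat.card H :=
  (Nat.card_congr (Subgroup.equivMapOfInjective H _ (MulAut.conj a).injective).toEquiv).symm

/-- Lemma 5 (second part): all connected components of the "yellow" graph on the
set of conjugates of the embedded dihedral group contain the same number of vertices. -/
theorem yellow_components_same_size (p : ℕ) (hp : p.Prime) (hodd : Odd p)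
    (G' : Type) [Group G'] [Finite G'] (f : DihedralGroup p →* G')
    (hf : Function.Injective f) (H₁ H₂ : Subgroup G')
    (h₁ : ∃ x : G', H₁ = Subgroup.map (MulAut.conj x).toMonoidHom f.range)
    (h₂ : ∃ x : G', H₂ = Subgroup.map (MulAut.conj x).toMonoidHom f.range) :
    Nat.card {H : Subgroup G' |
        (∃ x : G', H = Subgroup.map (MulAut.conj x).toMonoidHom f.range) ∧
          Nat.card ↥(H ⊓ H₁) = p} =
      Nat.card {H : Subgroup G' |
        (∃ x : G', H = Subgroup.map (MulAut.conj x).toMonoidHom f.range) ∧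
          Nat.card ↥(H ⊓ H₂) = p} := by
  obtain ⟨x₁, rfl⟩ := h₁
  obtain ⟨x₂, rfl⟩ := h₂
  set g : G' := x₂ * x₁⁻¹ with hg
  have hmap : ∀ A : Subgroup G',
      Subgroup.map (MulAut.conj g).toMonoidHom (A ⊓ Subgroup.map (MulAut.conj x₁).toMonoidHom f.range)
        = Subgroup.map (MulAut.conj g).toMonoidHom A ⊓ Subgroup.map (MulAut.conj x₂).toMonoidHom f.range := by
    intro A
    rw [Subgroup.map_inf _ _ _ (MulAut.conj g).injective, conj_map_map]
    have hx : g * x₁ = x₂ := by rw [hg]; group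
    rw [hx]
  apply Nat.card_congr
  refine ⟨fun ⟨H, hH⟩ => ⟨Subgroup.map (MulAut.conj g).toMonoidHom H, ?_⟩,
          fun ⟨H, hH⟩ => ⟨Subgroup.map (MulAut.conj g⁻¹).toMonoidHom H, ?_⟩, ?_, ?_⟩
  · obtain ⟨⟨x, rfl⟩, hcard⟩ := hH
    refine ⟨⟨g * x, (conj_map_map g x _)⟩, ?_⟩
    rw [← hmap, conj_card]
    exact hcard
  · obtain ⟨⟨x, rfl⟩, hcard⟩ := hH
    refine ⟨⟨g⁻¹ * x, (conj_map_map g⁻¹ x _)⟩, ?_⟩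
    have : Subgroup.map (MulAut.conj g⁻¹).toMonoidHom
        (Subgroup.map (MulAut.conj x).toMonoidHom f.range ⊓
          Subgroup.map (MulAut.conj x₂).toMonoidHom f.range)
        = Subgroup.map (MulAut.conj g⁻¹).toMonoidHom (Subgroup.map (MulAut.conj x).toMonoidHom f.range)
          ⊓ Subgroup.map (MulAut.conj x₁).toMonoidHom f.range := by
      have hx : g⁻¹ * x₂ = x₁ := by rw [hg]; group
      rw [Subgroup.map_inf _ _ _ (MulAut.conj g⁻¹).injective, conj_map_map,
        conj_map_map, hx]
    rw [← this, conj_card]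
    exact hcard
  · rintro ⟨H, hH⟩
    apply Subtype.ext
    show Subgroup.map _ (Subgroup.map _ H) = H
    rw [conj_map_map, inv_mul_cancel]
    ext y
    simp [MulAut.conj]
  · rintro ⟨H, hH⟩
    apply Subtype.ext
    show Subgroup.map _ (Subgroup.map _ H) = H
    rw [conj_map_map, mul_inv_cancel]
    ext y
    simp [MulAut.conj]
end

section
/- Let p be a prime with p ≡ 3 (mod 4), let G̃ be a finite group, let f : DihedralGroup p →* G̃ be injective, let a : ZMod p and x : G̃ satisfy x^2 = f (DihedralGroup.sr a) and ⊤ = f.range ⊔ Subgroup.zpowers x. Let K = {H : Subgroup G̃ | ∃ y : G̃, H = Subgroup.map (MulAut.conj y).toMonoidHom f.range}. Then the number of H ∈ K with Nat.card (H ⊓ f.range) = 2 is a positive multiple of p: there exists k ≥ 1 with Nat.card {H ∈ K | Nat.card (H ⊓ f.range) = 2} = k * p. -/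
/-!
The rotations `f (r c)` normalise `N = f.range`, so the cyclic group of order `p` they generate
acts by conjugation on the conjugates `H` of `N` with `|H ∩ N| = 2`. Such an `H` meets `N` in
`{1, f (sr b)}`, and `r 1` conjugates `sr b` to `sr (b - 2)`; hence the action has no fixed point
and the number of these conjugates is divisible by `p`.

It remains to see that `x N x⁻¹` is one of them. It contains `x² = f (sr a)`, and a subgroup of
`D_p` containing a reflection has order `2` or `2p`, so it suffices that `x` does not normalise
`N`. If it did, conjugation by `x` would send `r` to some `r^k`, and then `x²` would send `r` to
`r^(k²)`; but `x² = f (sr a)` inverts `r`, so `k² = -1` would be a square mod `p ≡ 3 (mod 4)`.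
-/

open Subgroup DihedralGroup Pointwise

theorem IsPGroup.dvd_natCard_of_forall_exists_smul_ne {p : ℕ} [Fact p.Prime] {P α : Type*}
    [Group P] [MulAction P α] (hP : IsPGroup p P) (s : Set α)
    (hs : ∀ g : P, ∀ a ∈ s, g • a ∈ s) (hfree : ∀ a ∈ s, ∃ g : P, g • a ≠ a) :
    p ∣ Nat.card s := by
  by_contra hp
  let t : SubMulAction P α := ⟨s, fun g _ ha => hs g _ ha⟩
  obtain ⟨⟨a, ha⟩, hfix⟩ := hP.nonempty_fixed_point_of_prime_not_dvd_card t hp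
  obtain ⟨g, hg⟩ := hfree a ha
  exact hg (congrArg Subtype.val (hfix g))

namespace Subgroup

variable {G : Type*} [Group G]

theorem eq_of_natCard_eq_two {L : Subgroup G} (hL : Nat.card L = 2) {u v : G} (hu : u ∈ L)
    (hv : v ∈ L) (hu1 : u ≠ 1) (hv1 : v ≠ 1) : u = v := by
  obtain ⟨w, -, hw⟩ := (Nat.card_eq_two_iff' (1 : L)).mp hL
  have huw := hw ⟨u, hu⟩ (by simpa [Subtype.ext_iff] using hu1)
  have hvw := hw ⟨v, hv⟩ (by simpa [Subtype.ext_iff] using hv1)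
  exact congrArg Subtype.val (huw.trans hvw.symm)

theorem natCard_inf_range_eq_natCard_comap {K : Type*} [Group K] {f : K →* G}
    (hf : Function.Injective f) (H : Subgroup G) :
    Nat.card ↥(H ⊓ f.range) = Nat.card (H.comap f) := by
  rw [← card_map_of_injective hf, map_comap_eq, inf_comm]

theorem natCard_smul_inf_of_mem_normalizer {N : Subgroup G} (H : Subgroup G) {y : G}
    (hy : y ∈ normalizer (N : Set G)) :
    Nat.card ↥((ConjAct.toConjAct y • H) ⊓ N) = Nat.card ↥(H ⊓ N) := by
  conv_lhs => rw [← conjAct_pointwise_smul_eq_self (H := N) hy, ← smul_inf]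
  exact Nat.card_congr (equivSMul _ _).toEquiv.symm

theorem mem_normalizer_of_le_map_conj [Finite G] {N : Subgroup G} {y : G}
    (hN : N ≤ N.map (MulAut.conj y).toMonoidHom) : y ∈ normalizer (N : Set G) := by
  refine conjAct_pointwise_smul_iff.mp (eq_of_le_of_card_ge hN ?_).symm
  exact (Nat.card_congr (equivSMul (ConjAct.toConjAct y) N).toEquiv).ge

theorem prime_dvd_natCard_conjugates_inf {p : ℕ} [Fact p.Prime] {N P : Subgroup G}
    (hP : IsPGroup p P) (hPN : P ≤ N) (m : ℕ)
    (hfree : ∀ y : G, Nat.card ↥(N.map (MulAut.conj y).toMonoidHom ⊓ N) = m →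
      ¬ P ≤ normalizer (N.map (MulAut.conj y).toMonoidHom : Set G)) :
    p ∣ Nat.card {H : Subgroup G |
      (∃ y : G, H = N.map (MulAut.conj y).toMonoidHom) ∧ Nat.card ↥(H ⊓ N) = m} := by
  let _ : MulAction P (Subgroup G) :=
    MulAction.compHom _ ((ConjAct.toConjAct : G ≃* ConjAct G).toMonoidHom.comp P.subtype)
  apply hP.dvd_natCard_of_forall_exists_smul_ne
  · rintro ⟨g, hg⟩ H ⟨⟨y, rfl⟩, hH⟩
    refine ⟨⟨g * y, (mul_smul (ConjAct.toConjAct g) (ConjAct.toConjAct y) N).symm⟩, ?_⟩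
    exact (natCard_smul_inf_of_mem_normalizer _ (le_normalizer (hPN hg))).trans hH
  · rintro H ⟨⟨y, rfl⟩, hH⟩
    obtain ⟨g, hgP, hg⟩ := SetLike.not_le_iff_exists.mp (hfree y hH)
    exact ⟨⟨g, hgP⟩, mt conjAct_pointwise_smul_iff.mp hg⟩

end Subgroup

namespace DihedralGroup

variable {n : ℕ}

theorem r_pow_n (i : ZMod n) : r i ^ n = 1 := by
  rw [r_pow, ZMod.natCast_self, mul_zero, r_zero]

theorem exists_sr_mem_of_natCard_eq_two (hn : Odd n) {L : Subgroup (DihedralGroup n)}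
    (hL : Nat.card L = 2) : ∃ b, sr b ∈ L := by
  obtain ⟨⟨u, hu⟩, hu1, -⟩ := (Nat.card_eq_two_iff' (1 : L)).mp hL
  have hu2 : orderOf u ∣ 2 := hL ▸ L.orderOf_dvd_natCard hu
  rcases u with i | b
  · have hi : orderOf (r i) = 1 := Nat.eq_one_of_dvd_coprimes (Nat.coprime_two_left.mpr hn) hu2
      (orderOf_dvd_of_pow_eq_one (r_pow_n i))
    exact absurd (Subtype.ext (orderOf_eq_one_iff.mp hi)) hu1
  · exact ⟨b, hu⟩

theorem eq_zero_of_r_mem_normalizer (hn : Odd n) {L : Subgroup (DihedralGroup n)}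
    (hL : Nat.card L = 2) {i : ZMod n} (hi : r i ∈ normalizer (L : Set (DihedralGroup n))) :
    i = 0 := by
  obtain ⟨b, hb⟩ := exists_sr_mem_of_natCard_eq_two hn hL
  have hconj : r i * sr b * (r i)⁻¹ = sr (b - 2 * i) := by
    rw [r_mul_sr, inv_r, sr_mul_r]
    ring_nf
  have hmem : sr (b - 2 * i) ∈ L := hconj ▸ (mem_normalizer_iff.mp hi _).mp hb
  have hb2 := L.eq_of_natCard_eq_two hL hb hmem (by rw [one_def]; nofun) (by rw [one_def]; nofun)
  have h2 : IsUnit (2 : ZMod n) := by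
    exact_mod_cast (ZMod.isUnit_iff_coprime 2 n).mpr (Nat.coprime_two_left.mpr hn)
  exact h2.mul_right_eq_zero.mp (sub_eq_self.mp (sr.inj hb2).symm)

theorem natCard_eq_two_of_sr_mem {p : ℕ} (hp : p.Prime) {L : Subgroup (DihedralGroup p)}
    {b : ZMod p} (hb : sr b ∈ L) (hL : L ≠ ⊤) : Nat.card L = 2 := by
  have : NeZero p := ⟨hp.ne_zero⟩
  obtain ⟨e, he⟩ : 2 ∣ Nat.card L := orderOf_sr b ▸ L.orderOf_dvd_natCard hb
  have hdvd : 2 * e ∣ 2 * p := he ▸ nat_card (n := p) ▸ L.card_subgroup_dvd_card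
  rcases hp.eq_one_or_self_of_dvd e (Nat.dvd_of_mul_dvd_mul_left two_pos hdvd) with rfl | rfl
  · exact he
  · exact absurd (L.eq_top_of_card_eq (he.trans nat_card.symm)) hL

theorem isSquare_neg_one_of_sq_mem_normalizer_range (hn : n ≠ 2) {G : Type*} [Group G]
    {f : DihedralGroup n →* G} (hf : Function.Injective f) {y : G}
    (hy : y ∈ normalizer (f.range : Set G)) {a : ZMod n} (hya : y ^ 2 = f (sr a)) :
    IsSquare (-1 : ZMod n) := by
  set σ := MulAut.conj y
  obtain ⟨w, hw⟩ : σ (f (r 1)) ∈ f.range := (mem_normalizer_iff.mp hy _).mp ⟨r 1, rfl⟩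
  obtain ⟨k, rfl⟩ : ∃ k, w = r k := by
    rcases w with k | k
    · exact ⟨k, rfl⟩
    · have := orderOf_injective f hf (sr k)
      rw [hw, MulEquiv.orderOf_eq, orderOf_injective f hf, orderOf_r_one, orderOf_sr] at this
      exact absurd this hn
  have hrot : ∀ j, σ (f (r j)) = f (r (k * j)) := by
    intro j
    rw [← ZMod.intCast_zmod_cast j, ← r_one_zpow, map_zpow, map_zpow, ← hw, ← map_zpow, r_zpow]
  have hsq : σ (σ (f (r 1))) = f (r (-1)) := by
    rw [← MulAut.mul_apply, ← pow_two, ← map_pow, hya, MulAut.conj_apply, ← map_inv, ← map_mul,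
      ← map_mul, inv_sr, sr_mul_r, sr_mul_sr]
    ring_nf
  rw [← hw, hrot] at hsq
  exact ⟨k, (r.inj (hf hsq)).symm⟩

theorem natCard_map_conj_range_inf_range {p : ℕ} (hp : p.Prime) (hp4 : p % 4 = 3) {G : Type*}
    [Group G] [Finite G] {f : DihedralGroup p →* G} (hf : Function.Injective f) {a : ZMod p}
    {x : G} (hx : x ^ 2 = f (sr a)) :
    Nat.card ↥(f.range.map (MulAut.conj x).toMonoidHom ⊓ f.range) = 2 := by
  have : Fact p.Prime := ⟨hp⟩
  rw [natCard_inf_range_eq_natCard_comap hf]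
  refine natCard_eq_two_of_sr_mem hp (b := a) ⟨f (sr a), ⟨sr a, rfl⟩, ?_⟩ fun htop => ?_
  · simp [MulAut.conj_apply, ← hx, pow_two, mul_assoc]
  · have hx' : x ∈ normalizer (f.range : Set G) :=
      mem_normalizer_of_le_map_conj fun _ ⟨d, hd⟩ => hd ▸ htop.ge (mem_top d)
    exact ZMod.exists_sq_eq_neg_one_iff.mp
      (isSquare_neg_one_of_sq_mem_normalizer_range (by omega) hf hx' hx) hp4

end DihedralGroup

theorem green_edges_multiple_of_p_general (p : ℕ) (hp : p.Prime) (hp4 : p % 4 = 3)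
    (G' : Type) [Group G'] [Finite G'] (f : DihedralGroup p →* G')
    (hf : Function.Injective f) (a : ZMod p) (x : G')
    (hx : x ^ 2 = f (DihedralGroup.sr a)) :
    ∃ k : ℕ, 1 ≤ k ∧
      Nat.card {H : Subgroup G' |
        (∃ y : G', H = Subgroup.map (MulAut.conj y).toMonoidHom f.range) ∧
          Nat.card ↥(H ⊓ f.range) = 2} = k * p := by
  have : Fact p.Prime := ⟨hp⟩
  have hodd : Odd p := hp.odd_of_ne_two (by omega)
  set S := {H : Subgroup G' |
    (∃ y : G', H = Subgroup.map (MulAut.conj y).toMonoidHom f.range) ∧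
      Nat.card ↥(H ⊓ f.range) = 2}
  have hP : IsPGroup p (zpowers (f (r 1))) :=
    .of_card (by rw [Nat.card_zpowers, orderOf_injective f hf, orderOf_r_one, pow_one])
  have hdvd : p ∣ Nat.card S :=
    prime_dvd_natCard_conjugates_inf (N := f.range) hP (zpowers_le.mpr ⟨r 1, rfl⟩) 2 fun y hy hle =>
      one_ne_zero <| eq_zero_of_r_mem_normalizer hodd
        (by rwa [natCard_inf_range_eq_natCard_comap hf] at hy)
        (le_normalizer_comap f (mem_comap.mpr (zpowers_le.mp hle)))
  have : Nonempty S := ⟨⟨_, ⟨x, rfl⟩, natCard_map_conj_range_inf_range hp hp4 hf hx⟩⟩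
  have hpos : 0 < Nat.card S := Nat.card_pos
  obtain ⟨k, hk⟩ := hdvd
  exact ⟨k, Nat.pos_of_ne_zero (by rintro rfl; omega), by rw [hk, mul_comm]⟩

/-- Lemma 6: the number of "green" edges incident to the vertex `f.range` is a
positive multiple of `p`. -/
theorem green_edges_multiple_of_p (p : ℕ) (hp : p.Prime) (hp4 : p % 4 = 3)
    (G' : Type) [Group G'] [Finite G'] (f : DihedralGroup p →* G')
    (hf : Function.Injective f) (a : ZMod p) (x : G')
    (hx : x ^ 2 = f (DihedralGroup.sr a))
    (hgen : (⊤ : Subgroup G') = f.range ⊔ Subgroup.zpowers x) :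
    ∃ k : ℕ, 1 ≤ k ∧
      Nat.card {H : Subgroup G' |
        (∃ y : G', H = Subgroup.map (MulAut.conj y).toMonoidHom f.range) ∧
          Nat.card ↥(H ⊓ f.range) = 2} = k * p :=
  green_edges_multiple_of_p_general p hp hp4 G' f hf a x hx
end

section
/- Let G be a finite group whose commutator subgroup is proper (⁅⊤, ⊤⁆ ≠ (⊤ : Subgroup G)), and let g : G. Then there exist a group H with Nat.card H ≤ (Nat.card G)^2, an injective group homomorphism f : G →* H, and an element h : H with h^2 = f g. -/
/-!
In the wreath product `G ≀ C₂`, of order `2 |G|²`, the element `(g, 1)σ` squares to the diagonal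
element `(g, g)`. With `ψ : G → Gᵃᵇ` the abelianization, `(a, b)σ^ε ↦ (ψ a / ψ b, ε)` is a
homomorphism onto the generalized dihedral group `Gᵃᵇ ⋊ C₂`; the diagonal copy of `G` and `(g, 1)σ`
both lie in the preimage of the order-two subgroup generated by `(ψ g, σ)`. As `Gᵃᵇ` is nontrivial,
this preimage is a proper subgroup, so it has order at most `|G|²`.

`C₂` is taken to be `ℤˣ`: the coordinates of the base group are indexed by `±1`, and `-1` acts on a
commutative group by inversion.
-/

open Subgroup

theorem Subgroup.two_mul_card_le_card_of_ne_top {G : Type*} [Group G] [Finite G]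
    {H : Subgroup G} (hH : H ≠ ⊤) : 2 * Nat.card H ≤ Nat.card G := by
  rw [← H.card_mul_index, mul_comm]
  exact Nat.mul_le_mul_left _ (one_lt_index_of_ne_top hH)

theorem eq_one_or_eq_of_mem_zpowers {G : Type*} [Group G] {d x : G} (hd : d ^ 2 = 1)
    (hx : x ∈ zpowers d) : x = 1 ∨ x = d := by
  obtain ⟨k, rfl⟩ := hx
  dsimp only
  rw [zpow_eq_zpow_emod' k hd]
  rcases Int.emod_two_eq k with h | h <;> simp [h]

namespace EconomicalRoot

def zpowUnitsHom (C : Type*) [CommGroup C] : ℤˣ →* MulAut C where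
  toFun u :=
    { zpowGroupHom (u : ℤ) with
      invFun := zpowGroupHom (u : ℤ)
      left_inv := fun c => by simp [← zpow_mul]
      right_inv := fun c => by simp [← zpow_mul] }
  map_one' := by ext; simp
  map_mul' u v := by ext c; simp [← zpow_mul, mul_comm]

@[simp]
theorem zpowUnitsHom_apply {C : Type*} [CommGroup C] (u : ℤˣ) (c : C) :
    zpowUnitsHom C u c = c ^ (u : ℤ) := rfl

abbrev GeneralizedDihedral (C : Type*) [CommGroup C] := C ⋊[zpowUnitsHom C] ℤˣ

theorem GeneralizedDihedral.sq_neg_one {C : Type*} [CommGroup C] (c : C) :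
    (⟨c, -1⟩ : GeneralizedDihedral C) ^ 2 = 1 := by
  ext <;> simp [pow_two]

variable {G C : Type*} [Group G] [CommGroup C]

def diagonal (D Q : Type*) [Group D] [Group Q] : D →* D ≀ᵣ Q where
  toFun x := ⟨fun _ => x, 1⟩
  map_one' := rfl
  map_mul' _ _ := by ext <;> simp [RegularWreathProduct.mul_def]

theorem diagonal_injective (D Q : Type*) [Group D] [Group Q] :
    Function.Injective (diagonal D Q) :=
  fun _ _ h => congrFun (congrArg RegularWreathProduct.left h) 1

def wreathToDihedral (ψ : G →* C) : G ≀ᵣ ℤˣ →* GeneralizedDihedral C where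
  toFun w := ⟨ψ (w.left 1) / ψ (w.left (-1)), w.right⟩
  map_one' := by ext <;> simp [RegularWreathProduct.one_left, RegularWreathProduct.one_right]
  map_mul' w w' := by
    refine SemidirectProduct.ext ?_ rfl
    simp only [SemidirectProduct.mul_left, zpowUnitsHom_apply, RegularWreathProduct.mul_left]
    rcases Int.units_eq_one_or w.right with h | h <;>
      simp [h, mul_div_mul_comm]

@[simp]
theorem wreathToDihedral_apply (ψ : G →* C) (w : G ≀ᵣ ℤˣ) :
    wreathToDihedral ψ w = ⟨ψ (w.left 1) / ψ (w.left (-1)), w.right⟩ := rfl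

def diagonalSqrt (g : G) : G ≀ᵣ ℤˣ := ⟨Pi.mulSingle 1 g, -1⟩

theorem diagonalSqrt_sq (g : G) : diagonalSqrt g ^ 2 = diagonal G ℤˣ g := by
  ext x
  · rcases Int.units_eq_one_or x with rfl | rfl <;>
      simp [diagonalSqrt, diagonal, pow_two, RegularWreathProduct.mul_left]
  · simp [diagonalSqrt, diagonal, pow_two, RegularWreathProduct.mul_right]

def rootSubgroup (ψ : G →* C) (g : G) : Subgroup (G ≀ᵣ ℤˣ) :=
  (zpowers (⟨ψ g, -1⟩ : GeneralizedDihedral C)).comap (wreathToDihedral ψ)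

theorem diagonal_mem_rootSubgroup (ψ : G →* C) (g x : G) :
    diagonal G ℤˣ x ∈ rootSubgroup ψ g := by
  have : wreathToDihedral ψ (diagonal G ℤˣ x) = 1 := by ext <;> simp [diagonal]
  simp [rootSubgroup, this]

theorem diagonalSqrt_mem_rootSubgroup (ψ : G →* C) (g : G) : diagonalSqrt g ∈ rootSubgroup ψ g := by
  have : wreathToDihedral ψ (diagonalSqrt g) = ⟨ψ g, -1⟩ := by ext <;> simp [diagonalSqrt]
  simp [rootSubgroup, this]

theorem rootSubgroup_ne_top {ψ : G →* C} (hψ : ψ ≠ 1) (g : G) : rootSubgroup ψ g ≠ ⊤ := by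
  obtain ⟨x, hx⟩ := DFunLike.ne_iff.mp hψ
  intro htop
  have hmem : (⟨Pi.mulSingle 1 x, 1⟩ : G ≀ᵣ ℤˣ) ∈ rootSubgroup ψ g := htop ▸ mem_top _
  rcases eq_one_or_eq_of_mem_zpowers (GeneralizedDihedral.sq_neg_one _) hmem with h | h
  · exact hx (by simpa using congrArg SemidirectProduct.left h)
  · simpa using congrArg SemidirectProduct.right h

theorem card_rootSubgroup_le [Finite G] {ψ : G →* C} (hψ : ψ ≠ 1) (g : G) :
    Nat.card (rootSubgroup ψ g) ≤ Nat.card G ^ 2 := by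
  have := two_mul_card_le_card_of_ne_top (rootSubgroup_ne_top hψ g)
  rw [RegularWreathProduct.card, Nat.card_eq_fintype_card (α := ℤˣ), Fintype.card_units_int] at this
  omega

end EconomicalRoot

open EconomicalRoot in
/-- Proposition 1, case (a): if the commutator subgroup of a finite group `G` is proper,
then `G` embeds into a group of order at most `|G|²` in which `g` is a square. -/
theorem economical_root_of_commutator_proper (G : Type) [Group G] [Finite G]
    (hG : ⁅(⊤ : Subgroup G), (⊤ : Subgroup G)⁆ ≠ ⊤) (g : G) :
    ∃ (H : Type) (_ : Group H) (f : G →* H),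
      Nat.card H ≤ (Nat.card G) ^ 2 ∧
      Function.Injective f ∧
      ∃ h : H, h ^ 2 = f g := by
  have hψ : (Abelianization.of : G →* Abelianization G) ≠ 1 := by
    rw [Ne, ← MonoidHom.ker_eq_top_iff, Abelianization.ker_of, commutator_def]
    exact hG
  refine ⟨rootSubgroup Abelianization.of g, inferInstance,
    (diagonal G ℤˣ).codRestrict _ (diagonal_mem_rootSubgroup _ g), card_rootSubgroup_le hψ g,
    fun x y h => diagonal_injective G ℤˣ (congrArg Subtype.val h),
    ⟨diagonalSqrt g, diagonalSqrt_mem_rootSubgroup _ g⟩, Subtype.ext (diagonalSqrt_sq g)⟩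
end

section
/- Let G be a finite group and g : G an element whose normal closure is proper (Subgroup.normalClosure {g} ≠ (⊤ : Subgroup G)). Then there exist a group H with Nat.card H ≤ (Nat.card G)^2, an injective group homomorphism f : G →* H, and an element h : H with h^2 = f g. -/
/-!
Embed `G` diagonally into the regular wreath product `G ≀ C₂`, where the element `(g, 1)σ`
squares to the diagonal image `(g, g)` of `g`. The wreath product has order `2|G|²`, which is
too big, so pass to the subgroup of elements whose two coordinates lie in the same coset of
`N = ⟨⟨g⟩⟩`. It still contains the diagonal and, since `g ∈ N`, also `(g, 1)σ`; its order
is `2|G||N|`, at most `|G|²` because the proper subgroup `N` has index at least `2`.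
-/

theorem Subgroup.card_mul_two_le_of_ne_top {G : Type*} [Group G] [Finite G] {H : Subgroup G}
    (hH : H ≠ ⊤) : Nat.card H * 2 ≤ Nat.card G :=
  H.card_mul_index ▸ Nat.mul_le_mul_left _ (H.one_lt_index_of_ne_top hH)

namespace RegularWreathProduct

variable {D Q : Type*} [Group D] [Group Q]

def diag : D →* D ≀ᵣ Q where
  toFun d := ⟨fun _ ↦ d, 1⟩
  map_one' := rfl
  map_mul' _ _ := by ext <;> simp [mul_def]

theorem diag_injective [Nonempty Q] : Function.Injective (diag : D →* D ≀ᵣ Q) :=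
  fun _ _ h ↦ congrFun (congrArg left h) (Classical.arbitrary Q)

variable (Q) in
def sameCosetSubgroup (N : Subgroup D) [N.Normal] : Subgroup (D ≀ᵣ Q) where
  carrier := {w | ∀ x y, (w.left x : D ⧸ N) = w.left y}
  one_mem' _ _ := rfl
  mul_mem' {a b} ha hb x y := by
    simp only [mul_left, Pi.mul_apply, QuotientGroup.mk_mul, ha x y,
      hb (a.right⁻¹ * x) (a.right⁻¹ * y)]
  inv_mem' {a} ha x y := by
    simp only [inv_left, Pi.inv_apply, QuotientGroup.mk_inv,
      ha (a.right * x) (a.right * y)]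

variable {N : Subgroup D} [N.Normal]

theorem diag_mem_sameCosetSubgroup (d : D) : diag d ∈ sameCosetSubgroup Q N :=
  fun _ _ ↦ rfl

theorem mk_mulSingle_mem_sameCosetSubgroup [DecidableEq Q] {d : D} (hd : d ∈ N) (q r : Q) :
    (⟨Pi.mulSingle q d, r⟩ : D ≀ᵣ Q) ∈ sameCosetSubgroup Q N := by
  have h (x : Q) : ((Pi.mulSingle q d : Q → D) x : D ⧸ N) = 1 := by
    rcases eq_or_ne x q with rfl | hx
    · simpa [QuotientGroup.eq_one_iff] using hd
    · simp [hx]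
  exact fun x y ↦ (h x).trans (h y).symm

variable (Q N) in
theorem card_sameCosetSubgroup_le [Finite D] [Finite Q] :
    Nat.card (sameCosetSubgroup Q N) ≤
      Nat.card D * Nat.card N ^ (Nat.card Q - 1) * Nat.card Q := by
  let e (w : sameCosetSubgroup Q N) : D × ({x : Q // x ≠ 1} → N) × Q :=
    (w.1.left 1, fun x ↦ ⟨(w.1.left 1)⁻¹ * w.1.left x, QuotientGroup.eq.mp (w.2 1 x)⟩,
      w.1.right)
  have he : Function.Injective e := by
    rintro ⟨⟨a, q⟩, ha⟩ ⟨⟨b, r⟩, hb⟩ h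
    simp only [e, Prod.mk.injEq, funext_iff, Subtype.ext_iff] at h
    obtain ⟨h1, hx, rfl⟩ := h
    congr
    funext x
    rcases eq_or_ne x 1 with rfl | hx1
    · exact h1
    · simpa [h1] using hx ⟨x, hx1⟩
  have hQ : Nat.card {x : Q // x ≠ 1} = Nat.card Q - 1 := by
    have := Fintype.ofFinite Q
    classical
    simp [Nat.card_eq_fintype_card, Fintype.card_subtype_compl]
  calc Nat.card (sameCosetSubgroup Q N) ≤ Nat.card (D × ({x : Q // x ≠ 1} → N) × Q) :=
        Nat.card_le_card_of_injective e he
    _ = _ := by rw [Nat.card_prod, Nat.card_prod, Nat.card_fun, hQ, mul_assoc]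

theorem mk_mulSingle_sq (d : D) :
    (⟨Pi.mulSingle 1 d, Multiplicative.ofAdd 1⟩ : D ≀ᵣ Multiplicative (ZMod 2)) ^ 2 =
      diag d := by
  have hC₂ : ∀ x : Multiplicative (ZMod 2), x = 1 ∨ x = Multiplicative.ofAdd 1 := by decide
  ext x
  · rcases hC₂ x with rfl | rfl <;> simp [sq, mul_def, diag]
  · exact (by decide : (Multiplicative.ofAdd 1 : Multiplicative (ZMod 2)) ^ 2 = 1)

end RegularWreathProduct

open RegularWreathProduct in
/-- Proposition 1, case (b): if the normal closure of `g` in a finite group `G` is proper,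
then `G` embeds into a group of order at most `|G|²` in which `g` is a square. -/
theorem economical_root_of_normal_closure_proper (G : Type) [Group G] [Finite G]
    (g : G) (hg : Subgroup.normalClosure {g} ≠ (⊤ : Subgroup G)) :
    ∃ (H : Type) (_ : Group H) (f : G →* H),
      Nat.card H ≤ (Nat.card G) ^ 2 ∧
      Function.Injective f ∧
      ∃ h : H, h ^ 2 = f g := by
  set N := Subgroup.normalClosure {g}
  have hgN : g ∈ N := Subgroup.subset_normalClosure rfl
  have hN : Nat.card N * 2 ≤ Nat.card G := Subgroup.card_mul_two_le_of_ne_top hg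
  refine ⟨sameCosetSubgroup (Multiplicative (ZMod 2)) N, inferInstance,
    diag.codRestrict _ diag_mem_sameCosetSubgroup, ?_, ?_,
    ⟨_, mk_mulSingle_mem_sameCosetSubgroup hgN 1 (Multiplicative.ofAdd 1)⟩,
      Subtype.ext (mk_mulSingle_sq g)⟩
  · calc _ ≤ Nat.card G * Nat.card N ^ (2 - 1) * 2 := by
          simpa using card_sameCosetSubgroup_le (Multiplicative (ZMod 2)) N
      _ ≤ Nat.card G ^ 2 := by rw [sq, pow_one, mul_assoc]; exact Nat.mul_le_mul_left _ hN
  · exact (MonoidHom.injective_codRestrict _ _ _).mpr diag_injective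
end

section
/- Let G be a group, let φ : Multiplicative (ZMod 2) →* MulAut (G × G) be a homomorphism with φ (Multiplicative.ofAdd 1) equal to the coordinate-swap automorphism MulEquiv.prodComm G G, and let W = (G × G) ⋊[φ] Multiplicative (ZMod 2) be the corresponding wreath product G ≀ ℤ₂. Let δ : G →* W be the diagonal embedding g ↦ ⟨(g, g), 1⟩, fix g : G, let w₀ = ⟨(g, 1), Multiplicative.ofAdd 1⟩ : W (a square root of δ g), and let C = ⁅Subgroup.normalClosure {g}, (⊤ : Subgroup G)⁆ be the mutual commutator subgroup of the normal closure of g with G. Then the subgroup H = Subgroup.closure (Set.range δ ∪ {w₀}) of W satisfies: for all g₁ g₂ : G, ⟨(g₁, g₂), 1⟩ ∈ H ↔ g₁ * g₂⁻¹ ∈ C, and ⟨(g₁, g₂), Multiplicative.ofAdd 1⟩ ∈ H ↔ g⁻¹ * (g₁ * g₂⁻¹) ∈ C. -/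
/-!
Modulo `C = ⁅⟨⟨g⟩⟩, G⁆` the element `g` is central, and `C` is the smallest normal subgroup with
this property. Hence the elements `⟨(a, b), t⟩` with `a ≡ g ^ t * b (mod C)` form a subgroup of
`W` containing the generators `δ x` and `w₀`, which gives one inclusion. Conversely, the `a` with
`⟨(a, 1), 1⟩ ∈ H` form a subgroup of `G` normalised by conjugation with `δ G`, and it contains
`⁅g, x⁆`, which is the first coordinate of `(w₀ * δ x) * (δ x * w₀)⁻¹`; so it contains `C`, and
multiplying by `δ b` and `w₀` reaches every `⟨(a, b), t⟩` with `a ≡ g ^ t * b (mod C)`.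
-/

open scoped commutatorElement

namespace Subgroup

variable {G : Type*} [Group G]

theorem commutatorElement_mem_iff_commute {N : Subgroup G} [N.Normal] {a b : G} :
    ⁅a, b⁆ ∈ N ↔ Commute (a : G ⧸ N) b := by
  rw [← QuotientGroup.eq_one_iff, ← QuotientGroup.mk'_apply, map_commutatorElement,
    commutatorElement_eq_one_iff_commute]
  rfl

theorem commutator_normalClosure_singleton_le_iff {N : Subgroup G} [N.Normal] {g : G} :
    ⁅normalClosure {g}, (⊤ : Subgroup G)⁆ ≤ N ↔ ∀ x, ⁅g, x⁆ ∈ N := by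
  refine ⟨fun h x => h (commutator_mem_commutator (subset_normalClosure rfl) (mem_top x)),
    fun h => ?_⟩
  have hcentral : normalClosure {g} ≤ (center (G ⧸ N)).comap (QuotientGroup.mk' N) := by
    refine normalClosure_le_normal (Set.singleton_subset_iff.2 ?_)
    rw [SetLike.mem_coe, mem_comap, mem_center_iff]
    exact fun q => QuotientGroup.induction_on q fun x =>
      (commutatorElement_mem_iff_commute.1 (h x)).symm.eq
  rw [commutator_le]
  exact fun n hn x _ => commutatorElement_mem_iff_commute.2
    ((mem_center_iff.1 (mem_comap.1 (hcentral hn)) x).symm)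

end Subgroup

theorem Multiplicative.eq_one_or_eq_ofAdd_one (t : Multiplicative (ZMod 2)) :
    t = 1 ∨ t = ofAdd 1 := by
  decide +revert

section SwapWreathProduct

open SemidirectProduct Multiplicative

variable {G : Type*} [Group G] {φ : Multiplicative (ZMod 2) →* MulAut (G × G)}

/-- The elements `⟨(a, b), t⟩` with `a ≡ g ^ t * b` modulo `N`, reading `t ∈ ZMod 2` as `0` or `1`;
it is closed under multiplication because `g` is central modulo `N`. -/
def twistedDiagonal (hφ : φ (ofAdd 1) = MulEquiv.prodComm) (N : Subgroup G) [N.Normal] (g : G)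
    (hg : ∀ x, ⁅g, x⁆ ∈ N) : Subgroup ((G × G) ⋊[φ] Multiplicative (ZMod 2)) where
  carrier := {w | (w.left.1 : G ⧸ N) = (g : G ⧸ N) ^ (toAdd w.right).val * w.left.2}
  one_mem' := by simp
  mul_mem' := by
    rintro ⟨⟨a₁, a₂⟩, t⟩ ⟨⟨b₁, b₂⟩, s⟩ ha hb
    simp only [Set.mem_ofPred_eq] at ha hb ⊢
    obtain rfl | rfl := eq_one_or_eq_ofAdd_one t <;>
      obtain rfl | rfl := eq_one_or_eq_ofAdd_one s <;>
      simp only [mul_left, mul_right, hφ, map_one, MulAut.one_apply, MulEquiv.coe_prodComm,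
        Prod.swap_prod_mk, Prod.mk_mul_mk, QuotientGroup.mk_mul, toAdd_one, toAdd_ofAdd,
        ← ofAdd_add, CharTwo.add_self_eq_zero, ofAdd_zero,
        ZMod.val_zero, ZMod.val_one, pow_zero, pow_one, one_mul, mul_one] at ha hb ⊢
    all_goals simp only [ha, hb, mul_assoc,
      (Subgroup.commutatorElement_mem_iff_commute.1 (hg _)).symm.left_comm]
  inv_mem' := by
    rintro ⟨⟨a₁, a₂⟩, t⟩ ha
    simp only [Set.mem_ofPred_eq] at ha ⊢
    obtain rfl | rfl := eq_one_or_eq_ofAdd_one t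
    · simpa [inv_left] using ha
    · simp only [inv_left, inv_right, hφ, ← ofAdd_neg, CharTwo.neg_eq, toAdd_ofAdd, ZMod.val_one,
        pow_one, Prod.inv_mk, MulEquiv.coe_prodComm, Prod.swap_prod_mk,
        QuotientGroup.mk_inv] at ha ⊢
      rw [ha, mul_inv_rev,
        (Subgroup.commutatorElement_mem_iff_commute.1 (hg a₂)).inv_right.left_comm,
        mul_inv_cancel, mul_one]

variable {hφ : φ (ofAdd 1) = MulEquiv.prodComm} {N : Subgroup G} [N.Normal] {g : G}
  {hg : ∀ x, ⁅g, x⁆ ∈ N}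

theorem mem_twistedDiagonal {w : (G × G) ⋊[φ] Multiplicative (ZMod 2)} :
    w ∈ twistedDiagonal hφ N g hg ↔
      (w.left.1 : G ⧸ N) = (g : G ⧸ N) ^ (toAdd w.right).val * w.left.2 :=
  Iff.rfl

theorem mk_one_mem_twistedDiagonal_iff {a b : G} :
    (⟨(a, b), 1⟩ : (G × G) ⋊[φ] Multiplicative (ZMod 2)) ∈ twistedDiagonal hφ N g hg ↔
      a * b⁻¹ ∈ N := by
  rw [mem_twistedDiagonal, toAdd_one, ZMod.val_zero, pow_zero, one_mul,
    QuotientGroup.eq_iff_div_mem, div_eq_mul_inv]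

theorem mk_ofAdd_one_mem_twistedDiagonal_iff {a b : G} :
    (⟨(a, b), ofAdd 1⟩ : (G × G) ⋊[φ] Multiplicative (ZMod 2)) ∈ twistedDiagonal hφ N g hg ↔
      g⁻¹ * (a * b⁻¹) ∈ N := by
  rw [mem_twistedDiagonal, toAdd_ofAdd, ZMod.val_one, pow_one, ← QuotientGroup.mk_mul,
    QuotientGroup.eq_iff_div_mem, div_eq_mul_inv, mul_inv_rev, ← mul_assoc]
  exact ‹N.Normal›.mem_comm_iff

theorem comap_inl_prod_inl_normal {H : Subgroup ((G × G) ⋊[φ] Multiplicative (ZMod 2))}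
    (hdiag : ∀ x, inl (x, x) ∈ H) : (H.comap (inl.comp (MonoidHom.inl G G))).Normal where
  conj_mem a ha y := by
    have hconj : (inl (y * a * y⁻¹, 1) : (G × G) ⋊[φ] Multiplicative (ZMod 2)) =
        inl (y, y) * inl (a, 1) * (inl (y, y))⁻¹ := by
      simp only [← map_mul, ← map_inv, Prod.mk_mul_mk, Prod.inv_mk, mul_one, mul_inv_cancel]
    show inl (y * a * y⁻¹, 1) ∈ H
    rw [hconj]
    exact mul_mem (mul_mem (hdiag y) ha) (inv_mem (hdiag y))

theorem commutatorElement_mem_comap_inl_prod_inl (hφ : φ (ofAdd 1) = MulEquiv.prodComm)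
    {H : Subgroup ((G × G) ⋊[φ] Multiplicative (ZMod 2))} (hdiag : ∀ x, inl (x, x) ∈ H)
    (hroot : (⟨(g, 1), ofAdd 1⟩ : (G × G) ⋊[φ] Multiplicative (ZMod 2)) ∈ H) (x : G) :
    ⁅g, x⁆ ∈ H.comap (inl.comp (MonoidHom.inl G G)) := by
  have hcomm : (inl (⁅g, x⁆, 1) : (G × G) ⋊[φ] Multiplicative (ZMod 2)) =
      (⟨(g, 1), ofAdd 1⟩ * inl (x, x)) * (inl (x, x) * ⟨(g, 1), ofAdd 1⟩)⁻¹ := by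
    refine eq_mul_inv_of_mul_eq ?_
    ext <;> simp [mul_left, mul_right, hφ, commutatorElement_def, mul_assoc]
  show inl (⁅g, x⁆, 1) ∈ H
  rw [hcomm]
  exact mul_mem (mul_mem hroot (hdiag x)) (inv_mem (mul_mem (hdiag x) hroot))

theorem twistedDiagonal_le {H : Subgroup ((G × G) ⋊[φ] Multiplicative (ZMod 2))}
    (hdiag : ∀ x, inl (x, x) ∈ H)
    (hroot : (⟨(g, 1), ofAdd 1⟩ : (G × G) ⋊[φ] Multiplicative (ZMod 2)) ∈ H)
    (hN : N ≤ H.comap (inl.comp (MonoidHom.inl G G))) : twistedDiagonal hφ N g hg ≤ H := by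
  rintro ⟨⟨a, b⟩, t⟩ hw
  obtain rfl | rfl := eq_one_or_eq_ofAdd_one t
  · have hab : inl (a * b⁻¹, 1) ∈ H := hN (mk_one_mem_twistedDiagonal_iff.1 hw)
    have hdecomp : (⟨(a, b), 1⟩ : (G × G) ⋊[φ] Multiplicative (ZMod 2)) =
        inl (a * b⁻¹, 1) * inl (b, b) := by
      ext <;> simp [mul_left]
    exact hdecomp ▸ mul_mem hab (hdiag b)
  · have habg : inl (a * b⁻¹ * g⁻¹, 1) ∈ H :=
      hN (‹N.Normal›.mem_comm (mk_ofAdd_one_mem_twistedDiagonal_iff.1 hw))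
    have hdecomp : (⟨(a, b), ofAdd 1⟩ : (G × G) ⋊[φ] Multiplicative (ZMod 2)) =
        inl (a * b⁻¹ * g⁻¹, 1) * ⟨(g, 1), ofAdd 1⟩ * inl (b, b) := by
      ext <;> simp [mul_left, mul_right, hφ]
    exact hdecomp ▸ mul_mem (mul_mem habg hroot) (hdiag b)

theorem closure_diagonal_union_root_eq_twistedDiagonal
    (hφ : φ (ofAdd 1) = MulEquiv.prodComm) {δ : G →* (G × G) ⋊[φ] Multiplicative (ZMod 2)}
    (hδ : ∀ x, δ x = ⟨(x, x), 1⟩) (g : G) :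
    Subgroup.closure (Set.range δ ∪ {⟨(g, 1), ofAdd 1⟩}) =
      twistedDiagonal hφ ⁅Subgroup.normalClosure {g}, ⊤⁆ g
        (Subgroup.commutator_normalClosure_singleton_le_iff.1 le_rfl) := by
  refine le_antisymm (Subgroup.closure_le _ |>.2 ?_) ?_
  · rintro _ (⟨x, rfl⟩ | rfl)
    · rw [SetLike.mem_coe, hδ, mk_one_mem_twistedDiagonal_iff, mul_inv_cancel]
      exact one_mem _
    · rw [SetLike.mem_coe, mk_ofAdd_one_mem_twistedDiagonal_iff, inv_one, mul_one, inv_mul_cancel]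
      exact one_mem _
  · have hdiag (x : G) : inl (x, x) ∈ Subgroup.closure (Set.range δ ∪ {⟨(g, 1), ofAdd 1⟩}) :=
      Subgroup.subset_closure (Or.inl ⟨x, hδ x⟩)
    have hroot : ⟨(g, 1), ofAdd 1⟩ ∈ Subgroup.closure (Set.range δ ∪ {⟨(g, 1), ofAdd 1⟩}) :=
      Subgroup.subset_closure (Or.inr rfl)
    have := comap_inl_prod_inl_normal hdiag
    exact twistedDiagonal_le hdiag hroot <| Subgroup.commutator_normalClosure_singleton_le_iff.2
      (commutatorElement_mem_comap_inl_prod_inl hφ hdiag hroot)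

end SwapWreathProduct

/-- Lemma 7: description of the subgroup of the wreath product `G ≀ ℤ₂` generated by
the diagonal copy of `G` and the square root `w₀ = ⟨(g, 1), 1̄⟩` of `δ g`. -/
theorem subgroup_generated_by_diagonal_and_root (G : Type) [Group G]
    (φ : Multiplicative (ZMod 2) →* MulAut (G × G))
    (hφ : φ (Multiplicative.ofAdd 1) = (MulEquiv.prodComm : (G × G) ≃* (G × G)))
    (δ : G →* (G × G) ⋊[φ] Multiplicative (ZMod 2))
    (hδ : ∀ g : G, δ g = ⟨(g, g), 1⟩)
    (g : G) :
    ∀ g₁ g₂ : G,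
      ((⟨(g₁, g₂), 1⟩ : (G × G) ⋊[φ] Multiplicative (ZMod 2)) ∈
          Subgroup.closure (Set.range δ ∪ {⟨(g, 1), Multiplicative.ofAdd 1⟩}) ↔
        g₁ * g₂⁻¹ ∈ ⁅Subgroup.normalClosure {g}, (⊤ : Subgroup G)⁆) ∧
      ((⟨(g₁, g₂), Multiplicative.ofAdd 1⟩ : (G × G) ⋊[φ] Multiplicative (ZMod 2)) ∈
          Subgroup.closure (Set.range δ ∪ {⟨(g, 1), Multiplicative.ofAdd 1⟩}) ↔
        g⁻¹ * (g₁ * g₂⁻¹) ∈ ⁅Subgroup.normalClosure {g}, (⊤ : Subgroup G)⁆) := by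
  intro g₁ g₂
  rw [closure_diagonal_union_root_eq_twistedDiagonal hφ hδ g]
  exact ⟨mk_one_mem_twistedDiagonal_iff, mk_ofAdd_one_mem_twistedDiagonal_iff⟩
end

section
/- Let G be a group, let φ : Multiplicative (ZMod 2) →* MulAut (G × G) be a homomorphism with φ (Multiplicative.ofAdd 1) equal to the coordinate-swap automorphism MulEquiv.prodComm G G, and let W = (G × G) ⋊[φ] Multiplicative (ZMod 2). Let δ : G →* W be the diagonal embedding, fix g : G, and let w₀ = ⟨(g, 1), Multiplicative.ofAdd 1⟩. If the mutual commutator of the normal closure of g with G is all of G (⁅Subgroup.normalClosure {g}, (⊤ : Subgroup G)⁆ = ⊤), then Subgroup.closure (Set.range δ ∪ {w₀}) = (⊤ : Subgroup W), i.e., the wreath product has no proper subgroup containing the diagonal copy of G together with the square root w₀ of δ g. -/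
open scoped commutatorElement

/-!
Let `H` be the subgroup in question and `K = {x | (x, 1) ∈ H}`. Conjugation by the diagonal makes
`K` normal in `G`, and since the swap fixes the diagonal, the commutator of `w₀` with `δ a` is
`(⁅g, a⁆, 1)`, so `g` is central modulo `K`. Hence so is all of `⟨⟨g⟩⟩`, giving
`G = ⁅⟨⟨g⟩⟩, G⁆ ≤ K`. Then `H` contains `G × G` (as `(a, b) = (a b⁻¹, 1) (b, b)`), and also the
swap `(g, 1)⁻¹ w₀`, which generates the top group `ℤ₂`.
-/

open Subgroup in
theorem Subgroup.commutator_normalClosure_singleton_top_le {G : Type*} [Group G]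
    {N : Subgroup G} [N.Normal] {g : G} (h : ∀ a, ⁅g, a⁆ ∈ N) : ⁅normalClosure {g}, ⊤⁆ ≤ N := by
  have : (upperCentralSeriesStep N).Normal :=
    upperCentralSeriesStep_eq_comap_center N ▸ inferInstance
  have hcentral : normalClosure {g} ≤ upperCentralSeriesStep N :=
    normalClosure_le_normal (Set.singleton_subset_iff.2 h)
  exact commutator_le.2 fun x hx y _ => hcentral hx y

theorem Multiplicative.closure_ofAdd_one_zmod_two :
    Subgroup.closure {Multiplicative.ofAdd (1 : ZMod 2)} = ⊤ := by
  rw [← Subgroup.zpowers_eq_closure, eq_top_iff]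
  rintro t -
  obtain rfl | rfl : t = 1 ∨ t = Multiplicative.ofAdd 1 := by revert t; decide
  exacts [one_mem _, Subgroup.mem_zpowers _]

namespace SemidirectProduct

theorem eq_top_of_range_inl_le {N Q : Type*} [Group N] [Group Q] {φ : Q →* MulAut N}
    {H : Subgroup (N ⋊[φ] Q)} {S : Set Q} (hS : Subgroup.closure S = ⊤)
    (hl : (inl : N →* N ⋊[φ] Q).range ≤ H) (hr : ∀ s ∈ S, inr s ∈ H) : H = ⊤ := by
  have hinr : H.comap inr = ⊤ :=
    top_le_iff.1 (hS ▸ (Subgroup.closure_le _).2 hr)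
  refine eq_top_iff.2 fun x _ => inl_left_mul_inr_right x ▸ H.mul_mem (hl ⟨_, rfl⟩) ?_
  exact (hinr ▸ Subgroup.mem_top x.right : x.right ∈ H.comap inr)

variable {G Q : Type*} [Group G] [Group Q] {φ : Q →* MulAut (G × G)}

def fstSlice (H : Subgroup ((G × G) ⋊[φ] Q)) : Subgroup G :=
  H.comap (inl.comp (MonoidHom.inl G G))

variable {H : Subgroup ((G × G) ⋊[φ] Q)}

theorem mem_fstSlice {x : G} : x ∈ fstSlice H ↔ inl (x, 1) ∈ H := Iff.rfl

theorem fstSlice_normal (hdiag : ∀ a : G, inl (a, a) ∈ H) : (fstSlice H).Normal where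
  conj_mem x hx c := by
    have := H.mul_mem (H.mul_mem (hdiag c) hx) (H.inv_mem (hdiag c))
    simpa [mem_fstSlice, ← map_inv, ← map_mul] using this

theorem commutatorElement_mem_fstSlice (hdiag : ∀ a : G, inl (a, a) ∈ H) {q : Q}
    (hq : ∀ a : G, φ q (a, a) = (a, a)) {g : G} (hw : inl (g, 1) * inr q ∈ H) (a : G) :
    ⁅g, a⁆ ∈ fstSlice H := by
  have hconj : inr q * inl (a, a) * (inr q)⁻¹ = (inl (a, a) : (G × G) ⋊[φ] Q) := by
    rw [← map_inv, ← inl_aut, hq]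
  have key : inl (g, 1) * inr q * inl (a, a) * (inl (g, 1) * inr q)⁻¹ * (inl (a, a))⁻¹ =
      (inl (⁅g, a⁆, 1) : (G × G) ⋊[φ] Q) :=
    calc _ = inl (g, 1) * (inr q * inl (a, a) * (inr q)⁻¹) * (inl (g, 1))⁻¹ * (inl (a, a))⁻¹ := by
          group
      _ = inl ⁅((g, 1) : G × G), (a, a)⁆ := by
          rw [hconj, commutatorElement_def, map_mul, map_mul, map_mul, map_inv, map_inv]
      _ = inl (⁅g, a⁆, 1) := by simp [commutatorElement_def]
  rw [mem_fstSlice, ← key]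
  exact H.mul_mem (H.mul_mem (H.mul_mem hw (hdiag a)) (H.inv_mem hw)) (H.inv_mem (hdiag a))

theorem range_inl_le_of_fstSlice_eq_top (hdiag : ∀ a : G, inl (a, a) ∈ H)
    (hK : fstSlice H = ⊤) : (inl : G × G →* (G × G) ⋊[φ] Q).range ≤ H := by
  rintro _ ⟨⟨a, b⟩, rfl⟩
  have : inl (a * b⁻¹, 1) * inl (b, b) ∈ H :=
    H.mul_mem (mem_fstSlice.1 (hK ▸ Subgroup.mem_top _)) (hdiag b)
  simpa [← map_mul] using this

theorem range_inl_le_of_commutator_eq_top (hdiag : ∀ a : G, inl (a, a) ∈ H) {q : Q}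
    (hq : ∀ a : G, φ q (a, a) = (a, a)) {g : G} (hw : inl (g, 1) * inr q ∈ H)
    (hg : ⁅Subgroup.normalClosure {g}, (⊤ : Subgroup G)⁆ = ⊤) :
    (inl : G × G →* (G × G) ⋊[φ] Q).range ≤ H := by
  have := fstSlice_normal hdiag
  refine range_inl_le_of_fstSlice_eq_top hdiag (top_le_iff.1 ?_)
  exact hg ▸ Subgroup.commutator_normalClosure_singleton_top_le
    (commutatorElement_mem_fstSlice hdiag hq hw)

end SemidirectProduct

open SemidirectProduct in
/-- If `⁅⟨⟨g⟩⟩, G⁆ = G`, then the wreath product `G ≀ ℤ₂` has no proper subgroup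
containing the diagonal copy of `G` and the square root `w₀` of `δ g`. -/
theorem closure_eq_top_of_commutator_eq_top (G : Type) [Group G]
    (φ : Multiplicative (ZMod 2) →* MulAut (G × G))
    (hφ : φ (Multiplicative.ofAdd 1) = (MulEquiv.prodComm : (G × G) ≃* (G × G)))
    (δ : G →* (G × G) ⋊[φ] Multiplicative (ZMod 2))
    (hδ : ∀ g : G, δ g = ⟨(g, g), 1⟩)
    (g : G)
    (hg : ⁅Subgroup.normalClosure {g}, (⊤ : Subgroup G)⁆ = ⊤) :
    Subgroup.closure (Set.range δ ∪ {⟨(g, 1), Multiplicative.ofAdd 1⟩}) =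
      (⊤ : Subgroup ((G × G) ⋊[φ] Multiplicative (ZMod 2))) := by
  set H := Subgroup.closure (Set.range δ ∪ {⟨(g, 1), Multiplicative.ofAdd 1⟩})
  have hdiag (a : G) : inl (a, a) ∈ H := Subgroup.subset_closure (Or.inl ⟨a, hδ a⟩)
  have hw : inl (g, 1) * inr (Multiplicative.ofAdd 1) ∈ H :=
    mk_eq_inl_mul_inr (φ := φ) _ (g, 1) ▸ Subgroup.subset_closure (Or.inr rfl)
  have hswap (a : G) : φ (Multiplicative.ofAdd 1) (a, a) = (a, a) := by simp [hφ]
  have hinl := range_inl_le_of_commutator_eq_top hdiag hswap hw hg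
  have hinr : inr (Multiplicative.ofAdd 1) ∈ H := by
    simpa using H.mul_mem (H.inv_mem (hinl ⟨(g, 1), rfl⟩)) hw
  exact eq_top_of_range_inl_le Multiplicative.closure_ofAdd_one_zmod_two hinl (by simpa using hinr)
end

section
/- (Levin's theorem) For every finite group G and every n ≥ 1 there exist a group W with Nat.card W = n * (Nat.card G)^n and an injective group homomorphism f : G →* W such that every positive equation of degree n over G has a solution in W: for every g : Fin n → G there exists h : W with (∏ i : Fin n, f (g i) * h) = 1 (the product taken in the natural order of Fin n). -/
/-!
Embed `G` diagonally in `G ≀ ℤ_n` and try `x = (a, σ)` with `σ` the generator of `ℤ_n`.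
Multiplying out, `∏ᵢ (gᵢ x) = (b, σⁿ) = (b, 1)` with `b j = ∏ᵢ gᵢ a(j - i)`. Taking
`a k = g_k⁻¹` and cutting the indices `0, …, n - 1` after `j`, each of the two blocks of `b j` has
the palindromic shape `v₀ v_{N-1}⁻¹ v₁ v_{N-2}⁻¹ ⋯ v_{N-1} v₀⁻¹`, which collapses to `1` from the
middle outwards.
-/

section Palindrome

variable {G : Type*} [Group G]

theorem List.prod_zipWith_mul_inv_reverse (l : List G) :
    (List.zipWith (fun a b => a * b⁻¹) l l.reverse).prod = 1 := by
  induction l using List.bidirectionalRec with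
  | nil => simp
  | singleton a => simp
  | cons_append a l b ih =>
    have hlen : l.length = l.reverse.length := (List.length_reverse).symm
    rw [List.reverse_cons, List.reverse_append, List.reverse_singleton, List.singleton_append,
      List.cons_append, List.zipWith_cons_cons, List.zipWith_append hlen]
    simp only [List.prod_cons, List.prod_append, ih, List.zipWith_cons_cons,
      List.zipWith_nil_left, List.prod_nil]
    group

theorem List.prod_map_range_mul_inv_reflect (v : ℕ → G) (N : ℕ) :
    ((List.range N).map fun i => v i * (v (N - 1 - i))⁻¹).prod = 1 := by
  have h := List.prod_zipWith_mul_inv_reverse ((List.range N).map v)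
  rwa [← List.map_reverse, List.range_eq_range', List.reverse_range', ← List.range_eq_range',
    List.map_map, List.zipWith_map, List.zipWith_self, zero_add] at h

theorem ZMod.prod_map_range_mul_inv_sub {n : ℕ} [NeZero n] (u : ZMod n → G) (j : ZMod n) :
    ((List.range n).map fun i : ℕ => u i * (u (j - i))⁻¹).prod = 1 := by
  obtain ⟨m, hm⟩ : ∃ m, n = j.val + 1 + m := ⟨n - (j.val + 1), by have := j.val_lt; omega⟩
  have hj : ((j.val : ℕ) : ZMod n) = j := ZMod.natCast_zmod_val j
  have lower : ((List.range (j.val + 1)).map fun i : ℕ => u i * (u (j - i))⁻¹).prod = 1 := by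
    rw [← List.prod_map_range_mul_inv_reflect (fun k : ℕ => u k) (j.val + 1)]
    refine congrArg _ (List.map_congr_left fun i hi => ?_)
    rw [List.mem_range] at hi
    rw [add_tsub_cancel_right, Nat.cast_sub (by omega), hj]
  have upper : ((List.range m).map fun i => u ↑(j.val + 1 + i) * (u (j - ↑(j.val + 1 + i)))⁻¹).prod
      = 1 := by
    rw [← List.prod_map_range_mul_inv_reflect (fun k => u ↑(j.val + 1 + k)) m]
    refine congrArg _ (List.map_congr_left fun i hi => ?_)
    rw [List.mem_range] at hi
    have hn : ((j.val + 1 + m : ℕ) : ZMod n) = 0 := by rw [← hm, ZMod.natCast_self]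
    have : ((j.val + 1 + (m - 1 - i) : ℕ) : ZMod n) = j - ↑(j.val + 1 + i) := by
      rw [eq_sub_iff_add_eq, ← Nat.cast_add,
        show j.val + 1 + (m - 1 - i) + (j.val + 1 + i) = j.val + (j.val + 1 + m) by omega,
        Nat.cast_add, hn, add_zero, hj]
    rw [this]
  rw [show List.range n = _ from hm ▸ List.range_add, List.map_append, List.prod_append,
    List.map_map, lower]
  exact (one_mul _).trans upper

end Palindrome

namespace RegularWreathProduct

variable {D Q : Type*} [Group D] [Group Q]

def diagonal : D →* D ≀ᵣ Q where
  toFun d := ⟨fun _ => d, 1⟩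
  map_one' := rfl
  map_mul' _ _ := by ext <;> simp

@[simp]
theorem left_diagonal (d : D) : (diagonal d : D ≀ᵣ Q).left = fun _ => d := rfl

@[simp]
theorem right_diagonal (d : D) : (diagonal d : D ≀ᵣ Q).right = 1 := rfl

theorem diagonal_injective [Nonempty Q] : Function.Injective (diagonal : D →* D ≀ᵣ Q) :=
  fun _ _ h => congrFun (congrArg left h) (Classical.arbitrary Q)

theorem prod_map_range_mk (c : ℕ → Q → D) (t : Q) (m : ℕ) :
    ((List.range m).map fun i => (⟨c i, t⟩ : D ≀ᵣ Q)).prod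
      = ⟨fun x => ((List.range m).map fun i => c i ((t ^ i)⁻¹ * x)).prod, t ^ m⟩ := by
  induction m with
  | zero => ext <;> simp
  | succ m ih =>
    simp only [List.range_succ, List.map_append, List.prod_append, ih, List.map_singleton,
      List.prod_singleton, pow_succ]
    rfl

theorem exists_prod_map_diagonal_mul_eq_one {n : ℕ} [NeZero n]
    (g : Fin n → D) : ∃ h : D ≀ᵣ Multiplicative (ZMod n),
      ((List.finRange n).map fun i => diagonal (g i) * h).prod = 1 := by
  let u : ZMod n → D := fun k => g ⟨k.val, k.val_lt⟩
  let a : Multiplicative (ZMod n) → D := fun y => (u y.toAdd)⁻¹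
  let t : Multiplicative (ZMod n) := .ofAdd 1
  refine ⟨⟨a, t⟩, ?_⟩
  have hterm : (fun i : Fin n => diagonal (g i) * ⟨a, t⟩)
      = (fun i : ℕ => (⟨fun y => u i * a y, t⟩ : D ≀ᵣ _)) ∘ Fin.val := by
    funext i
    have hi : g i = u (i : ℕ) := congrArg g (Fin.ext (ZMod.val_cast_of_lt i.2).symm)
    ext <;> simp [hi]
  rw [hterm, ← List.map_map, List.map_coe_finRange_eq_range, prod_map_range_mk]
  ext x
  · refine (congrArg List.prod (List.map_congr_left fun i _ => ?_)).trans
      (ZMod.prod_map_range_mul_inv_sub u x.toAdd)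
    simp [a, t, sub_eq_neg_add]
  · simp

end RegularWreathProduct

theorem levin_theorem_general (G : Type) [Group G] (n : ℕ) (hn : 1 ≤ n) :
    ∃ (W : Type) (_ : Group W) (f : G →* W),
      Nat.card W = n * (Nat.card G) ^ n ∧
      Function.Injective f ∧
      ∀ g : Fin n → G, ∃ h : W,
        ((List.finRange n).map (fun i => f (g i) * h)).prod = 1 := by
  have : NeZero n := ⟨by omega⟩
  refine ⟨G ≀ᵣ Multiplicative (ZMod n), inferInstance, RegularWreathProduct.diagonal, ?_,
    RegularWreathProduct.diagonal_injective,
    RegularWreathProduct.exists_prod_map_diagonal_mul_eq_one⟩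
  rw [RegularWreathProduct.card, Nat.card_congr Multiplicative.toAdd, Nat.card_zmod, mul_comm]

/-- Levin's theorem: the wreath product `G ≀ ℤ_n`, of order `n·|G|ⁿ`, contains solutions
to all positive equations `g₁ x g₂ x ⋯ g_n x = 1` of degree `n` over `G`. -/
theorem levin_theorem (G : Type) [Group G] [Finite G] (n : ℕ) (hn : 1 ≤ n) :
    ∃ (W : Type) (_ : Group W) (f : G →* W),
      Nat.card W = n * (Nat.card G) ^ n ∧
      Function.Injective f ∧
      ∀ g : Fin n → G, ∃ h : W,
        ((List.finRange n).map (fun i => f (g i) * h)).prod = 1 :=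
  levin_theorem_general G n hn
end
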